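/- For the cycle C_n (n ≥ 3), any set of n − 2 consecutive vertices of C_n is a completion set of C_n; that is, if W consists of n − 2 consecutive vertices of C_n, then (C_n)_W is a complete graph. -/

import Mathlib

open MvPolynomial

/-- A vertex `v` is a *free* vertex of `G` if the induced subgraph of `G` on the
neighbourhood `N_G(v)` is complete. -/
def IsFreeVertex {V : Type} (G : SimpleGraph V) (v : V) : Prop :=
  ∀ u ∈ G.neighborSet v, ∀ w ∈ G.neighborSet v, u ≠ w → G.Adj u w

/-- `f(G)`: the number of free vertices of `G`. -/
noncomputable def freeCount {V : Type} (G : SimpleGraph V) : ℕ :=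
  Set.ncard {v | IsFreeVertex G v}

/-- `i(G)`: the number of isolated vertices of `G`. -/
noncomputable def isolatedCount {V : Type} (G : SimpleGraph V) : ℕ :=
  Set.ncard {v | ∀ u, ¬ G.Adj v u}

/-- The diameter of a connected component `c` of `G`: the maximal distance in `G` between
two vertices of `c`. -/
noncomputable def compDiam {V : Type} (G : SimpleGraph V) (c : G.ConnectedComponent) : ℕ :=
  sSup {d | ∃ u w : V, G.connectedComponentMk u = c ∧ G.connectedComponentMk w = c ∧
    G.dist u w = d}

/-- `d(G) = i(G) + Σᵢ diam(Gᵢ)`: the number of isolated vertices of `G` plus the sum of the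
diameters of the connected components of `G`. -/
noncomputable def dVal {V : Type} (G : SimpleGraph V) : ℕ :=
  isolatedCount G + ∑ᶠ c : G.ConnectedComponent, compDiam G c

/-- `t(G)`: the number of connected components of `G`. -/
noncomputable def numComponents {V : Type} (G : SimpleGraph V) : ℕ :=
  Nat.card G.ConnectedComponent

/-- The vertex-connectivity `κ(G)`: the minimum cardinality of a set `T` of vertices such
that `G − T` is disconnected (i.e. has two vertices not joined by any path). -/
noncomputable def kappaVal {V : Type} (G : SimpleGraph V) : ℕ :=
  sInf {r | ∃ T : Set V, T.ncard = r ∧ ¬ (G.induce Tᶜ).Preconnected}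

/-- `G_v`: the graph with `V(G_v) = V(G)` and
`E(G_v) = E(G) ∪ {{u,w} : u, w ∈ N_G(v)}`. -/
def cliqueCompletion {V : Type} (G : SimpleGraph V) (v : V) : SimpleGraph V where
  Adj u w := G.Adj u w ∨ (u ≠ w ∧ G.Adj v u ∧ G.Adj v w)
  symm := by
    constructor
    intro a b h
    rcases h with h | ⟨hne, h1, h2⟩
    · exact Or.inl h.symm
    · exact Or.inr ⟨hne.symm, h2, h1⟩
  loopless := by
    constructor
    intro a h
    rcases h with h | ⟨hne, _, _⟩
    · exact G.irrefl h
    · exact hne rfl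

/-- `G − v`: the induced subgraph of `G` on `V(G) ∖ {v}`. -/
def deleteVertex {V : Type} (G : SimpleGraph V) (v : V) : SimpleGraph {u : V | u ≠ v} :=
  G.induce {u : V | u ≠ v}

/-- `G` is a disjoint union of complete graphs, i.e. every connected component of `G`
is a complete graph. -/
def IsDisjointUnionOfCompletes {V : Type} (G : SimpleGraph V) : Prop :=
  ∀ u w : V, G.Reachable u w → u = w ∨ G.Adj u w

/-- The generalized binomial edge ideal `J_{K_m,G} ⊆ S = K[x_{ij} : i ∈ [m], j ∈ [n]]` of a
graph `G` on `[n]`: the ideal generated by the 2-minors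
`x_{ik}x_{jl} − x_{il}x_{jk}` for `1 ≤ i < j ≤ m` and edges `{k,l}` of `G` with `k < l`. -/
noncomputable def genBinomialEdgeIdeal (K : Type) [Field K] (m n : ℕ)
    (G : SimpleGraph (Fin n)) : Ideal (MvPolynomial (Fin m × Fin n) K) :=
  Ideal.span {f | ∃ (i j : Fin m) (k l : Fin n), i < j ∧ k < l ∧ G.Adj k l ∧
    f = X (i, k) * X (j, l) - X (i, l) * X (j, k)}

/-- The depth of `S/J` with respect to the maximal homogeneous ideal
`𝔪 = (x_s : s ∈ σ)` of the polynomial ring `S = K[x_s : s ∈ σ]`: the supremum of the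
lengths of `S/J`-regular sequences consisting of elements of `𝔪`. -/
noncomputable def quotDepth (K : Type) [Field K] {σ : Type} (J : Ideal (MvPolynomial σ K)) : ℕ :=
  sSup {r | ∃ rs : List (MvPolynomial σ K), rs.length = r ∧
    (∀ f ∈ rs, f ∈ Ideal.span (Set.range (X : σ → MvPolynomial σ K))) ∧
    RingTheory.Sequence.IsRegular (MvPolynomial σ K ⧸ J) rs}

/-- The iterated clique-completion `G_W` of `G` at the vertices of a list `W`:
`G_[] = G` and `G_(v :: l) = (G_v)_l`. -/
def cliqueCompletionIter {V : Type} (G : SimpleGraph V) : List V → SimpleGraph V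
  | [] => G
  | v :: l => cliqueCompletionIter (cliqueCompletion G v) l

/-!
Completing a graph at `v` turns the closed neighbourhood of `v` into a clique. Along a walk
`p 0, p 1, …`, if `{p 0, …, p (k + 1)}` is already a clique, then `p (k + 1)` is adjacent to all of
it and to `p (k + 2)`, so completing at `p (k + 1)` makes `{p 0, …, p (k + 2)}` a clique. Walking
around `C_n` from `a - 1`, the `n - 2` completion vertices `a, …, a + n - 3` are exactly the inner
vertices of the first `n` steps, which visit every vertex.
-/

lemma cliqueCompletionIter_append {V : Type} (G : SimpleGraph V) (l : List V) (v : V) :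
    cliqueCompletionIter G (l ++ [v]) = cliqueCompletion (cliqueCompletionIter G l) v := by
  induction l generalizing G with
  | nil => rfl
  | cons w l ih => exact ih (cliqueCompletion G w)

lemma le_cliqueCompletion {V : Type} (G : SimpleGraph V) (v : V) : G ≤ cliqueCompletion G v :=
  fun _ _ h => Or.inl h

lemma le_cliqueCompletionIter {V : Type} (G : SimpleGraph V) (l : List V) :
    G ≤ cliqueCompletionIter G l := by
  induction l generalizing G with
  | nil => exact le_rfl
  | cons v l ih => exact (le_cliqueCompletion G v).trans (ih _)

lemma isClique_insert_neighborSet_cliqueCompletion {V : Type} (G : SimpleGraph V) (v : V) :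
    (cliqueCompletion G v).IsClique (insert v (G.neighborSet v)) := by
  rw [SimpleGraph.isClique_insert]
  exact ⟨fun u hu w hw huw => Or.inr ⟨huw, hu, hw⟩, fun w hw _ => Or.inl hw⟩

theorem isClique_image_Iic_cliqueCompletionIter {V : Type} (G : SimpleGraph V) (p : ℕ → V)
    (hp : ∀ i, G.Adj (p i) (p (i + 1))) (k : ℕ) :
    (cliqueCompletionIter G ((List.range k).map (fun i => p (i + 1)))).IsClique
      (p '' Set.Iic (k + 1)) := by
  induction k with
  | zero =>
    rw [show Set.Iic (0 + 1) = {0, 1} by ext; simp; omega, Set.image_pair]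
    exact SimpleGraph.isClique_pair.mpr fun _ => hp 0
  | succ k ih =>
    set H := cliqueCompletionIter G ((List.range k).map (fun i => p (i + 1)))
    rw [List.range_succ, List.map_append, List.map_singleton, cliqueCompletionIter_append]
    refine (isClique_insert_neighborSet_cliqueCompletion H (p (k + 1))).subset ?_
    rintro _ ⟨t, ht, rfl⟩
    rcases Nat.lt_or_ge t (k + 2) with ht' | ht'
    · by_cases heq : p t = p (k + 1)
      · exact Or.inl heq
      · exact Or.inr (ih ⟨k + 1, Set.mem_Iic.mpr le_rfl, rfl⟩ ⟨t, Nat.le_of_lt_succ ht', rfl⟩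
          (Ne.symm heq))
    · obtain rfl : t = k + 2 := le_antisymm ht ht'
      exact Or.inr (le_cliqueCompletionIter G _ (hp (k + 1)))

open Fin.NatCast Fin.CommRing in
/-- any `n − 2` consecutive vertices of the cycle `C_n` (`n ≥ 3`) form a
completion set; indeed the iterated clique-completion of `C_n` at the consecutive vertices
`a, a+1, …, a+n−3` (mod `n`) is a complete graph. -/
theorem consecutive_completion_set (n : ℕ) (hn : 3 ≤ n) (a : Fin n) :
    cliqueCompletionIter (SimpleGraph.cycleGraph n)
      ((List.range (n - 2)).map
        (fun i => (⟨(a.val + i) % n, Nat.mod_lt _ (by omega)⟩ : Fin n))) = ⊤ := by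
  obtain ⟨m, rfl⟩ : ∃ m, n = m + 2 := ⟨n - 2, by omega⟩
  set p : ℕ → Fin (m + 2) := fun t => a - 1 + t with hp_def
  have hwalk : ∀ t, (SimpleGraph.cycleGraph (m + 2)).Adj (p t) (p (t + 1)) := fun t =>
    SimpleGraph.cycleGraph_adj.mpr (Or.inr (by simp only [hp_def]; push_cast; ring))
  have hlist : (List.range (m + 2 - 2)).map
      (fun i => (⟨(a.val + i) % (m + 2), Nat.mod_lt _ (by omega)⟩ : Fin (m + 2))) =
      (List.range m).map (fun i => p (i + 1)) := by
    refine List.map_congr_left fun i _ => ?_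
    rw [show p (i + 1) = a + i by simp only [hp_def]; push_cast; ring]
    ext
    simp [Fin.val_add, Fin.val_natCast]
  have hsurj : p '' Set.Iic (m + 1) = Set.univ := by
    refine Set.eq_univ_of_forall fun x => ⟨(x - (a - 1)).val, ?_, ?_⟩
    · exact Nat.le_of_lt_succ (x - (a - 1)).isLt
    · simp [hp_def]
  rw [hlist, ← SimpleGraph.isClique_univ, ← hsurj]
  exact isClique_image_Iic_cliqueCompletionIter _ p hwalk m
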